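/- Let H be a finite-dimensional complex Hilbert space with unit vectors φ₀ and Θ such that ⟨Θ, φ₀⟩ ≠ 0 and Θ is not a scalar multiple of φ₀. Let Ψ = λ(φ₀ ⊗ Θ + Θ ⊗ φ₀) be normalized (λ > 0 chosen so that ‖Ψ‖ = 1), P = |φ₀⟩⟨φ₀|. Then there is no rank-one projection Q with QP = 0 such that ⟨Ψ, E_P E_Q Ψ⟩ = 1, where E_R = R ⊗ 1 + 1 ⊗ R − R ⊗ R. -/

import Mathlib

/-!
With `Q = |θ⟩⟨θ|` and `θ ⟂ φ₀`, the projection `E_Q` sends `φ₀ ⊗ Θ + Θ ⊗ φ₀` to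
`⟨θ, Θ⟩ (φ₀ ⊗ θ + θ ⊗ φ₀)`, which `E_P` fixes. Hence `⟨Ψ, E_P E_Q Ψ⟩ = 2λ²|⟨θ, Θ⟩|²`, while
`‖Ψ‖ = 1` reads `2λ²(1 + |⟨Θ, φ₀⟩|²) = 1`. The value `1` would force
`|⟨θ, Θ⟩|² = 1 + |⟨Θ, φ₀⟩|² > 1`, contradicting Cauchy–Schwarz.
-/

open Matrix Kronecker

/-- Rank-one operator `|φ⟩⟨φ|` on `ℂ^n`. -/
noncomputable def proj {n : ℕ} (φ : Fin n → ℂ) : Matrix (Fin n) (Fin n) ℂ :=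
  vecMulVec φ (star φ)

/-- Elementary tensor of two vectors. -/
def tp {n : ℕ} (x y : Fin n → ℂ) : Fin n × Fin n → ℂ := fun p => x p.1 * y p.2

/-- The symmetric property projection `E_R = R ⊗ 1 + 1 ⊗ R − R ⊗ R`. -/
noncomputable def EE {n : ℕ} (R : Matrix (Fin n) (Fin n) ℂ) :
    Matrix (Fin n × Fin n) (Fin n × Fin n) ℂ :=
  R ⊗ₖ (1 : Matrix (Fin n) (Fin n) ℂ) + (1 : Matrix (Fin n) (Fin n) ℂ) ⊗ₖ R - R ⊗ₖ R

section Tensor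

variable {n : ℕ}

lemma tp_smul_left (c : ℂ) (x y : Fin n → ℂ) : tp (c • x) y = c • tp x y := by
  funext p; simp only [tp, Pi.smul_apply, smul_eq_mul]; ring

lemma tp_smul_right (c : ℂ) (x y : Fin n → ℂ) : tp x (c • y) = c • tp x y := by
  funext p; simp only [tp, Pi.smul_apply, smul_eq_mul]; ring

lemma star_tp_dotProduct_tp (x y u v : Fin n → ℂ) :
    star (tp x y) ⬝ᵥ tp u v = (star x ⬝ᵥ u) * (star y ⬝ᵥ v) := by
  simp only [dotProduct, Fintype.sum_prod_type, Finset.sum_mul_sum, tp, Pi.star_apply, star_mul']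
  exact Finset.sum_congr rfl fun i _ => Finset.sum_congr rfl fun j _ => by ring

lemma star_symm_tp_dotProduct_symm_tp (x y u v : Fin n → ℂ) :
    star (tp x y + tp y x) ⬝ᵥ (tp u v + tp v u) =
      2 * ((star x ⬝ᵥ u) * (star y ⬝ᵥ v) + (star x ⬝ᵥ v) * (star y ⬝ᵥ u)) := by
  simp only [star_add, add_dotProduct, dotProduct_add, star_tp_dotProduct_tp]
  ring

lemma kronecker_mulVec_tp (A B : Matrix (Fin n) (Fin n) ℂ) (x y : Fin n → ℂ) :
    (A ⊗ₖ B) *ᵥ tp x y = tp (A *ᵥ x) (B *ᵥ y) := by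
  funext p
  simp only [mulVec, dotProduct, tp, Fintype.sum_prod_type, kroneckerMap_apply,
    Finset.sum_mul_sum]
  exact Finset.sum_congr rfl fun i _ => Finset.sum_congr rfl fun j _ => by ring

lemma proj_mulVec (φ x : Fin n → ℂ) : proj φ *ᵥ x = (star φ ⬝ᵥ x) • φ := by
  rw [proj, vecMulVec_mulVec, op_smul_eq_smul]

lemma EE_mulVec_tp (R : Matrix (Fin n) (Fin n) ℂ) (x y : Fin n → ℂ) :
    EE R *ᵥ tp x y = tp (R *ᵥ x) y + tp x (R *ᵥ y) - tp (R *ᵥ x) (R *ᵥ y) := by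
  simp only [EE, add_mulVec, sub_mulVec, kronecker_mulVec_tp, one_mulVec]

lemma EE_mulVec_tp_of_mulVec_left_eq_zero {R : Matrix (Fin n) (Fin n) ℂ} {x : Fin n → ℂ}
    (hx : R *ᵥ x = 0) (y : Fin n → ℂ) : EE R *ᵥ tp x y = tp x (R *ᵥ y) := by
  rw [EE_mulVec_tp, hx, ← zero_smul ℂ (0 : Fin n → ℂ), tp_smul_left, tp_smul_left]
  simp

lemma EE_mulVec_tp_of_mulVec_right_eq_zero {R : Matrix (Fin n) (Fin n) ℂ} {y : Fin n → ℂ}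
    (hy : R *ᵥ y = 0) (x : Fin n → ℂ) : EE R *ᵥ tp x y = tp (R *ᵥ x) y := by
  rw [EE_mulVec_tp, hy, ← zero_smul ℂ (0 : Fin n → ℂ), tp_smul_right, tp_smul_right]
  simp

lemma EE_proj_mul_EE_proj_mulVec_symm_tp {φ θ : Fin n → ℂ} (hφ : star φ ⬝ᵥ φ = 1)
    (hφθ : star φ ⬝ᵥ θ = 0) (Θ : Fin n → ℂ) :
    (EE (proj φ) * EE (proj θ)) *ᵥ (tp φ Θ + tp Θ φ) = (star θ ⬝ᵥ Θ) • (tp φ θ + tp θ φ) := by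
  have hQφ : proj θ *ᵥ φ = 0 := by
    rw [proj_mulVec, star_dotProduct, hφθ, star_zero, zero_smul]
  have hPφ : proj φ *ᵥ φ = φ := by rw [proj_mulVec, hφ, one_smul]
  have hPθ : proj φ *ᵥ θ = 0 := by rw [proj_mulVec, hφθ, zero_smul]
  rw [← mulVec_mulVec, mulVec_add, EE_mulVec_tp_of_mulVec_left_eq_zero hQφ,
    EE_mulVec_tp_of_mulVec_right_eq_zero hQφ, proj_mulVec θ Θ, tp_smul_left, tp_smul_right,
    ← smul_add, mulVec_smul, mulVec_add, EE_mulVec_tp_of_mulVec_right_eq_zero hPθ,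
    EE_mulVec_tp_of_mulVec_left_eq_zero hPθ, hPφ]

lemma star_dotProduct_EE_proj_mul_EE_proj_mulVec {φ θ : Fin n → ℂ} (hφ : star φ ⬝ᵥ φ = 1)
    (hφθ : star φ ⬝ᵥ θ = 0) (Θ : Fin n → ℂ) (c : ℝ) :
    star (c • (tp φ Θ + tp Θ φ)) ⬝ᵥ ((EE (proj φ) * EE (proj θ)) *ᵥ (c • (tp φ Θ + tp Θ φ))) =
      ((2 * c ^ 2 * Complex.normSq (star θ ⬝ᵥ Θ) : ℝ) : ℂ) := by
  rw [mulVec_smul, EE_proj_mul_EE_proj_mulVec_symm_tp hφ hφθ, star_smul, smul_dotProduct,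
    dotProduct_smul, dotProduct_smul, star_symm_tp_dotProduct_symm_tp, star_trivial, hφ, hφθ,
    star_dotProduct Θ θ]
  simp only [Complex.real_smul, smul_eq_mul, Complex.star_def]
  push_cast
  rw [← Complex.mul_conj]
  ring

lemma star_dotProduct_self_symm_tp {φ Θ : Fin n → ℂ} (hφ : star φ ⬝ᵥ φ = 1)
    (hΘ : star Θ ⬝ᵥ Θ = 1) (c : ℝ) :
    star (c • (tp φ Θ + tp Θ φ)) ⬝ᵥ (c • (tp φ Θ + tp Θ φ)) =
      ((2 * c ^ 2 * (1 + Complex.normSq (star Θ ⬝ᵥ φ)) : ℝ) : ℂ) := by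
  rw [star_smul, smul_dotProduct, dotProduct_smul, star_symm_tp_dotProduct_symm_tp, star_trivial,
    hφ, hΘ, star_dotProduct φ Θ]
  simp only [Complex.real_smul, Complex.star_def]
  push_cast
  rw [← Complex.mul_conj]
  ring

end Tensor

lemma normSq_star_dotProduct_le {ι : Type*} [Fintype ι] (x y : ι → ℂ) :
    Complex.normSq (star x ⬝ᵥ y) ≤ (star x ⬝ᵥ x).re * (star y ⬝ᵥ y).re := by
  have h := inner_mul_inner_self_le (𝕜 := ℂ) (WithLp.toLp 2 x) (WithLp.toLp 2 y)
  simp only [EuclideanSpace.inner_toLp_toLp, dotProduct_comm _ (star _), RCLike.re_to_complex] at h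
  rwa [star_dotProduct y, norm_star, ← sq, ← Complex.normSq_eq_norm_sq] at h

theorem stmt19_general {n : ℕ} (φ₀ Θ : Fin n → ℂ)
    (hφ₀ : star φ₀ ⬝ᵥ φ₀ = 1) (hΘ : star Θ ⬝ᵥ Θ = 1)
    (hover : star Θ ⬝ᵥ φ₀ ≠ 0)
    (lam : ℝ)
    (Ψ : Fin n × Fin n → ℂ) (hΨdef : Ψ = lam • (tp φ₀ Θ + tp Θ φ₀))
    (hΨnorm : star Ψ ⬝ᵥ Ψ = 1) :
    ¬ ∃ θ : Fin n → ℂ, star θ ⬝ᵥ θ = 1 ∧ star φ₀ ⬝ᵥ θ = 0 ∧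
        star Ψ ⬝ᵥ ((EE (proj φ₀) * EE (proj θ)) *ᵥ Ψ) = 1 := by
  rintro ⟨θ, hθ, hφ₀θ, hval⟩
  subst hΨdef
  rw [star_dotProduct_EE_proj_mul_EE_proj_mulVec hφ₀ hφ₀θ] at hval
  rw [star_dotProduct_self_symm_tp hφ₀ hΘ] at hΨnorm
  have hval' : 2 * lam ^ 2 * Complex.normSq (star θ ⬝ᵥ Θ) = 1 := by exact_mod_cast hval
  have hnorm' : 2 * lam ^ 2 * (1 + Complex.normSq (star Θ ⬝ᵥ φ₀)) = 1 := by
    exact_mod_cast hΨnorm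
  have hCS : Complex.normSq (star θ ⬝ᵥ Θ) ≤ 1 := by
    simpa [hθ, hΘ] using normSq_star_dotProduct_le θ Θ
  have hover' : 0 < Complex.normSq (star Θ ⬝ᵥ φ₀) := Complex.normSq_pos.mpr hover
  nlinarith [sq_nonneg lam]

theorem stmt19 {n : ℕ} (φ₀ Θ : Fin n → ℂ)
    (hφ₀ : star φ₀ ⬝ᵥ φ₀ = 1) (hΘ : star Θ ⬝ᵥ Θ = 1)
    (hover : star Θ ⬝ᵥ φ₀ ≠ 0)
    (hnprop : ∀ z : ℂ, Θ ≠ z • φ₀)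
    (lam : ℝ) (hlam : 0 < lam)
    (Ψ : Fin n × Fin n → ℂ) (hΨdef : Ψ = lam • (tp φ₀ Θ + tp Θ φ₀))
    (hΨnorm : star Ψ ⬝ᵥ Ψ = 1) :
    ¬ ∃ θ : Fin n → ℂ, star θ ⬝ᵥ θ = 1 ∧ star φ₀ ⬝ᵥ θ = 0 ∧
        star Ψ ⬝ᵥ ((EE (proj φ₀) * EE (proj θ)) *ᵥ Ψ) = 1 :=
  stmt19_general φ₀ Θ hφ₀ hΘ hover lam Ψ hΨdef hΨnorm
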